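/- For every nonzero complex number x: the matrix 𝒢^φ(x) is symmetric and invertible; A_0^φ(x)ᵀ 𝒢^φ(x) = 𝒢^φ(x) A_0^φ(x); A_∞ᵀ 𝒢^φ(x) + 𝒢^φ(x) A_∞ = n·𝒢^φ(x); and x·(d/dx)𝒢^φ(x) = (R^φ)ᵀ 𝒢^φ(x) + 𝒢^φ(x) R^φ. -/

import Mathlib

open Finset Matrix

noncomputable section

/-- The matrix `A_0^φ(x)`: `(A_0^φ(x))_{k+1,k} = μ` for `0 ≤ k ≤ μ−2`,
`(A_0^φ(x))_{0,μ−1} = μx`, all other entries `0`. -/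
def A0phi (μ : ℕ) (x : ℂ) : Matrix (Fin μ) (Fin μ) ℂ :=
  Matrix.of fun i j =>
    if (i : ℕ) = (j : ℕ) + 1 then (μ : ℂ)
    else if (i : ℕ) = 0 ∧ (j : ℕ) = μ - 1 then (μ : ℂ) * x else 0

/-- The diagonal matrix `A_∞ = diag(α_0, …, α_{μ−1})` with `α_k = k − s_k`. -/
def Ainf (μ : ℕ) (s : ℕ → ℚ) : Matrix (Fin μ) (Fin μ) ℂ :=
  Matrix.diagonal fun k : Fin μ => ((k : ℕ) : ℂ) - ((s (k : ℕ) : ℚ) : ℂ)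

/-- The diagonal matrix `R^φ`: `(R^φ)_{k,k} = 0` for `0 ≤ k ≤ n`, and
`(R^φ)_{k,k} = s_k/μ` for `n+1 ≤ k ≤ μ−1`. -/
def Rphi (μ n : ℕ) (s : ℕ → ℚ) : Matrix (Fin μ) (Fin μ) ℂ :=
  Matrix.diagonal fun k : Fin μ =>
    if (k : ℕ) ≤ n then 0 else ((s (k : ℕ) : ℚ) : ℂ) / (μ : ℂ)

/-- The symmetric matrix `𝒢^φ(x)`: `𝒢^φ(x)_{k,n−k} = 1` for `0 ≤ k ≤ n`,
`𝒢^φ(x)_{k,μ+n−k} = x` for `n+1 ≤ k ≤ μ−1`, all other entries `0`. -/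
def Gphi (μ n : ℕ) (x : ℂ) : Matrix (Fin μ) (Fin μ) ℂ :=
  Matrix.of fun i j =>
    if (i : ℕ) + (j : ℕ) = n then 1
    else if (i : ℕ) + (j : ℕ) = μ + n then x else 0

/-! The weights enter only through two properties of the sorted enumeration `s` of `S_w`. It
starts with `n + 1` zeros, one from each block `{ℓμ/w_i}`; and the remaining values are symmetric,
`s_i + s_{μ+n-i} = μ`, because `q ↦ μ - q` maps each block onto the same block with its `0`
replaced by `μ`, and two monotone enumerations of the same multiset coincide.

Given these, every identity is an entrywise check. `𝒢^φ(x)` is a diagonal matrix times the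
permutation matrix of the involution `k ↦ n - k` on `[0, n]`, `k ↦ μ + n - k` on `[n + 1, μ)`.
The entry `(i, j)` of `A_0^φ(x)ᵀ 𝒢^φ(x)` is `μ g(i + j + 1)` with `g(m) = 𝒢^φ(x)_{i,m-i}`, the
corner entry `μx` being absorbed by `x g(m) = g(m + μ)`; so it is symmetric in `i, j`. For
diagonal `D`, `(Dᵀ 𝒢 + 𝒢 D)_{ij} = (D_i + D_j) 𝒢_{ij}`, and `𝒢_{ij} ≠ 0` only when
`i + j ∈ {n, μ + n}`. -/

namespace Multiset

theorem map_sub_one_sub_range (m : ℕ) : (range m).map (fun k => m - 1 - k) = range m := by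
  rw [← coe_range, map_coe, coe_eq_coe, show (fun k => m - 1 - k) = (0 + m - 1 - ·) by simp,
    ← List.reverse_range', ← List.range_eq_range']
  exact List.reverse_perm _

theorem eq_of_map_range_eq_of_monotoneOn {α : Type*} [PartialOrder α] {m : ℕ} {f g : ℕ → α}
    (hf : MonotoneOn f (Set.Iio m)) (hg : MonotoneOn g (Set.Iio m))
    (h : (range m).map f = (range m).map g) {k : ℕ} (hk : k < m) : f k = g k := by
  have sorted : ∀ {f : ℕ → α}, MonotoneOn f (Set.Iio m) →
      ((List.range m).map f).Pairwise (· ≤ ·) := fun hf =>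
    List.pairwise_map.2 <| (List.pairwise_le_range).imp_of_mem fun ha hb hab =>
      hf (by simpa using ha) (by simpa using hb) hab
  have hlist : (List.range m).map f = (List.range m).map g :=
    List.Perm.eq_of_pairwise' (sorted hf) (sorted hg) (Quotient.exact h)
  simpa [hk] using congrArg (·[k]?) hlist

theorem add_eq_of_map_range_sub_eq {α : Type*} [AddCommGroup α] [PartialOrder α]
    [IsOrderedAddMonoid α] {m : ℕ} {t : ℕ → α} {c : α} (ht : MonotoneOn t (Set.Iio m))
    (h : (range m).map (c - t ·) = (range m).map t) {k : ℕ} (hk : k < m) :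
    t k + t (m - 1 - k) = c := by
  have hrefl : MonotoneOn (fun k => c - t (m - 1 - k)) (Set.Iio m) := fun a _ b hb hab =>
    sub_le_sub_left (ht (by simp; omega) (by simp; omega) (by omega)) c
  have hmap : (range m).map t = (range m).map (fun k => c - t (m - 1 - k)) := by
    rw [← h]
    conv_lhs => rw [← map_sub_one_sub_range m]
    rw [map_map]
    rfl
  exact eq_sub_iff_add_eq.mp (eq_of_map_range_eq_of_monotoneOn ht hrefl hmap hk)

theorem map_sub_map_range_mul_div_add_zero {K : Type*} [Field K] [CharZero K] (c : K) {W : ℕ}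
    (hW : W ≠ 0) :
    ((range W).map fun ℓ : ℕ => (ℓ : K) * c / W).map (c - ·) + {0} =
      (range W).map (fun ℓ : ℕ => (ℓ : K) * c / W) + {c} := by
  have hW' : (W : K) ≠ 0 := Nat.cast_ne_zero.2 hW
  have hreflect : (range (W + 1)).map (fun ℓ : ℕ => c - ℓ * c / W) =
      (range (W + 1)).map (fun ℓ : ℕ => (ℓ : K) * c / W) := by
    conv_rhs => rw [← map_sub_one_sub_range]
    rw [map_map]
    refine map_congr rfl fun ℓ hℓ => ?_
    rw [mem_range] at hℓ
    simp only [Function.comp_apply, add_tsub_cancel_right, Nat.cast_sub (Nat.lt_succ_iff.1 hℓ)]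
    field_simp
  simpa [range_succ, hW', map_map, Function.comp_def, ← singleton_add, add_comm] using hreflect

theorem map_bind_add_replicate {ι β : Type*} {g : β → β} {a b : β} (I : Multiset ι)
    (B : ι → Multiset β) (h : ∀ i ∈ I, (B i).map g + {a} = B i + {b}) :
    (I.bind B).map g + replicate (card I) a = I.bind B + replicate (card I) b := by
  induction I using Multiset.induction_on with
  | empty => simp
  | cons i I ih =>
    rw [cons_bind, map_add, card_cons, replicate_succ, replicate_succ, ← singleton_add,
      ← singleton_add, add_add_add_comm, h i (mem_cons_self i I),
      ih fun j hj => h j (mem_cons_of_mem hj), add_add_add_comm]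

theorem card_le_count_bind {ι β : Type*} [DecidableEq β] {a : β} (I : Multiset ι)
    (B : ι → Multiset β) (h : ∀ i ∈ I, a ∈ B i) : card I ≤ count a (I.bind B) := by
  induction I using Multiset.induction_on with
  | empty => simp
  | cons i I ih =>
    rw [cons_bind, count_add, card_cons]
    have hi := one_le_count_iff_mem.2 (h i (mem_cons_self i I))
    have hI := ih fun j hj => h j (mem_cons_of_mem hj)
    omega

theorem eq_zero_of_le_count_zero {α : Type*} [Zero α] [LinearOrder α] {μ m : ℕ}
    {s : ℕ → α} (hs : MonotoneOn s (Set.Iio μ)) (h0 : ∀ k < μ, 0 ≤ s k)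
    (hc : m ≤ count 0 ((range μ).map s)) {k : ℕ} (hk : k < m) : s k = 0 := by
  have hmμ : m ≤ μ := hc.trans ((count_le_card _ _).trans (by simp))
  suffices hlast : s (m - 1) = 0 by
    exact le_antisymm (hlast ▸ hs (by simp; omega) (by simp; omega) (by omega)) (h0 k (by omega))
  by_contra hne
  have hsub : (range μ).filter (0 = s ·) ≤ range (m - 1) := by
    refine ((nodup_range μ).filter _ |> le_iff_subset).2 fun j hj => ?_
    rw [mem_filter, mem_range] at hj
    by_contra hjm
    rw [mem_range, not_lt] at hjm
    exact hne (le_antisymm (hj.2 ▸ hs (by simp; omega) (by simpa using hj.1) hjm) (h0 _ (by omega)))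
  have hcard := card_le_card hsub
  rw [count_map] at hc
  rw [card_range] at hcard
  omega

end Multiset

def weightSpectrum (n μ : ℕ) (w : ℕ → ℕ) : Multiset ℚ :=
  (Finset.range (n + 1)).val.bind fun i =>
    (Multiset.range (w i)).map fun ℓ : ℕ => (ℓ : ℚ) * μ / (w i)

-- As written in `stmt_15`, `ℓ : ℚ` ranges over `Multiset.range (w i)` coerced to `Multiset ℚ`.
theorem weightSpectrum_eq_bind_map_coe (n μ : ℕ) (w : ℕ → ℕ) :
    weightSpectrum n μ w = (Finset.range (n + 1)).val.bind fun i =>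
      (Multiset.range (w i)).map fun ℓ => (ℓ : ℚ) * μ / (w i) := by
  simp only [weightSpectrum, Multiset.pure_def, Multiset.bind_def, Multiset.bind_singleton,
    Multiset.map_map, Function.comp_def]

section weightSpectrum

variable {n μ : ℕ} {w : ℕ → ℕ}

theorem nonneg_of_mem_weightSpectrum {q : ℚ} (hq : q ∈ weightSpectrum n μ w) : 0 ≤ q := by
  obtain ⟨i, -, hi⟩ := Multiset.mem_bind.1 hq
  obtain ⟨ℓ, -, rfl⟩ := Multiset.mem_map.1 hi
  positivity

theorem succ_le_count_zero_weightSpectrum (hw : ∀ i ≤ n, w i ≠ 0) :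
    n + 1 ≤ (weightSpectrum n μ w).count 0 := by
  have h := Multiset.card_le_count_bind (a := 0) (Finset.range (n + 1)).val
    (fun i => (Multiset.range (w i)).map fun ℓ : ℕ => (ℓ : ℚ) * μ / (w i)) fun i hi =>
      Multiset.mem_map.2 ⟨0, Multiset.mem_range.2 (Nat.pos_of_ne_zero
        (hw i (Nat.lt_succ_iff.1 (Finset.mem_range.1 hi)))), by simp⟩
  rwa [Finset.card_val, Finset.card_range] at h

theorem map_sub_weightSpectrum_add_replicate (hw : ∀ i ≤ n, w i ≠ 0) :
    (weightSpectrum n μ w).map ((μ : ℚ) - ·) + Multiset.replicate (n + 1) 0 =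
      weightSpectrum n μ w + Multiset.replicate (n + 1) (μ : ℚ) := by
  have h := Multiset.map_bind_add_replicate (Finset.range (n + 1)).val
    (fun i => (Multiset.range (w i)).map fun ℓ : ℕ => (ℓ : ℚ) * μ / (w i)) fun i hi =>
      Multiset.map_sub_map_range_mul_div_add_zero (μ : ℚ)
        (hw i (Nat.lt_succ_iff.1 (Finset.mem_range.1 hi)))
  rwa [Finset.card_val, Finset.card_range] at h

variable {s : ℕ → ℚ}

theorem lt_of_map_range_eq_weightSpectrum (hmult : (Multiset.range μ).map s = weightSpectrum n μ w)
    (hw : ∀ i ≤ n, w i ≠ 0) : n < μ := by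
  have h := succ_le_count_zero_weightSpectrum (μ := μ) hw
  rw [← hmult] at h
  simpa using h.trans (Multiset.count_le_card _ _)

theorem eq_zero_of_map_range_eq_weightSpectrum (hs : MonotoneOn s (Set.Iio μ))
    (hmult : (Multiset.range μ).map s = weightSpectrum n μ w) (hw : ∀ i ≤ n, w i ≠ 0) {k : ℕ}
    (hk : k ≤ n) : s k = 0 :=
  Multiset.eq_zero_of_le_count_zero hs
    (fun _ hk => nonneg_of_mem_weightSpectrum
      (hmult ▸ Multiset.mem_map_of_mem s (Multiset.mem_range.2 hk)))
    (hmult ▸ succ_le_count_zero_weightSpectrum hw) (Nat.lt_succ_of_le hk)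

theorem add_eq_of_map_range_eq_weightSpectrum (hs : MonotoneOn s (Set.Iio μ))
    (hmult : (Multiset.range μ).map s = weightSpectrum n μ w) (hw : ∀ i ≤ n, w i ≠ 0) {i j : ℕ}
    (hi : i < μ) (hj : j < μ) (hij : i + j = μ + n) : s i + s j = μ := by
  have hnμ := lt_of_map_range_eq_weightSpectrum hmult hw
  set m := μ - (n + 1)
  set t : ℕ → ℚ := fun k => s (n + 1 + k)
  have hsplit : (Multiset.range μ).map s =
      Multiset.replicate (n + 1) 0 + (Multiset.range m).map t := by
    conv_lhs => rw [show μ = n + 1 + m by omega]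
    rw [Multiset.range_add, Multiset.map_add, Multiset.map_map]
    congr 1
    refine Multiset.eq_replicate.2 ⟨by simp, fun q hq => ?_⟩
    obtain ⟨k, hk, rfl⟩ := Multiset.mem_map.1 hq
    exact eq_zero_of_map_range_eq_weightSpectrum hs hmult hw
      (Nat.lt_succ_iff.1 (Multiset.mem_range.1 hk))
  have hrefl := map_sub_weightSpectrum_add_replicate (μ := μ) hw
  rw [← hmult, hsplit, Multiset.map_add, Multiset.map_replicate, sub_zero, Multiset.map_map]
    at hrefl
  have ht : (Multiset.range m).map ((μ : ℚ) - t ·) = (Multiset.range m).map t := by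
    refine add_right_cancel
      (b := Multiset.replicate (n + 1) 0 + Multiset.replicate (n + 1) (μ : ℚ)) ?_
    simpa only [add_comm, add_left_comm, add_assoc, Function.comp_def] using hrefl
  have hmono : MonotoneOn t (Set.Iio m) := fun a ha b hb hab =>
    hs (by simp at ha ⊢; omega) (by simp at hb ⊢; omega) (by omega)
  have hsum := Multiset.add_eq_of_map_range_sub_eq hmono ht (k := i - (n + 1)) (by omega)
  simp only [t] at hsum
  rwa [show n + 1 + (i - (n + 1)) = i by omega, show n + 1 + (m - 1 - (i - (n + 1))) = j by omega]
    at hsum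

end weightSpectrum

theorem Matrix.diagonal_transpose_mul_add_mul_diagonal_apply {ι R : Type*} [Fintype ι]
    [DecidableEq ι] [CommSemiring R] (d : ι → R) (M : Matrix ι ι R) (i j : ι) :
    ((diagonal d)ᵀ * M + M * diagonal d) i j = (d i + d j) * M i j := by
  rw [diagonal_transpose, add_apply, diagonal_mul, mul_diagonal, add_mul, mul_comm (M i j)]

section Gphi

variable {μ n : ℕ}

def antidiagonalPerm (hnμ : n < μ) : Equiv.Perm (Fin μ) :=
  Function.Involutive.toPerm
    (fun i => ⟨if (i : ℕ) ≤ n then n - i else μ + n - i, by split_ifs <;> omega⟩)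
    fun i => by ext; dsimp only; split_ifs <;> omega

theorem antidiagonalPerm_apply_val (hnμ : n < μ) (i : Fin μ) :
    (antidiagonalPerm hnμ i : ℕ) = if (i : ℕ) ≤ n then n - i else μ + n - i :=
  rfl

theorem Gphi_transpose (x : ℂ) : (Gphi μ n x)ᵀ = Gphi μ n x := by
  ext i j
  simp only [transpose_apply, Gphi, of_apply, add_comm (j : ℕ)]

theorem Gphi_eq_diagonal_mul_permMatrix (hnμ : n < μ) (x : ℂ) :
    Gphi μ n x =
      diagonal (fun i : Fin μ => if (i : ℕ) ≤ n then 1 else x) *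
        (antidiagonalPerm hnμ).permMatrix ℂ := by
  ext i j
  simp only [Gphi, of_apply, diagonal_mul, PEquiv.toMatrix_apply, Equiv.toPEquiv_apply,
    Option.mem_def, Option.some.injEq, Fin.ext_iff, antidiagonalPerm_apply_val]
  have := i.isLt
  have := j.isLt
  split_ifs <;> first | omega | simp

theorem isUnit_Gphi (hnμ : n < μ) {x : ℂ} (hx : x ≠ 0) : IsUnit (Gphi μ n x) := by
  rw [Gphi_eq_diagonal_mul_permMatrix hnμ, isUnit_iff_isUnit_det, det_mul, det_diagonal,
    det_permutation, isUnit_iff_ne_zero]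
  simp [Finset.prod_ne_zero_iff, apply_ite (· ≠ (0 : ℂ)), hx]

def gphiCoeff (μ n : ℕ) (x : ℂ) (m : ℕ) : ℂ :=
  if m = n then 1 else if m = μ + n then x else 0

theorem Gphi_apply (x : ℂ) (i j : Fin μ) : Gphi μ n x i j = gphiCoeff μ n x (i + j) :=
  rfl

theorem mul_gphiCoeff (hnμ : n < μ) (x : ℂ) {m : ℕ} (hm : m < μ) :
    x * gphiCoeff μ n x m = gphiCoeff μ n x (m + μ) := by
  simp only [gphiCoeff]
  split_ifs <;> first | omega | simp

theorem A0phi_transpose_mul_Gphi_apply (hnμ : n < μ) (x : ℂ) (i j : Fin μ) :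
    ((A0phi μ x)ᵀ * Gphi μ n x) i j = μ * gphiCoeff μ n x (i + j + 1) := by
  have hi := i.isLt
  have hj := j.isLt
  rw [mul_apply]
  simp only [transpose_apply, A0phi, of_apply, Gphi_apply]
  rcases Nat.lt_or_ge (i + 1) μ with hlt | hge
  · rw [Fintype.sum_eq_single ⟨i + 1, hlt⟩ fun k hk => ?_]
    · rw [if_pos rfl, add_right_comm]
    · rw [Ne, Fin.ext_iff] at hk
      rw [if_neg hk, if_neg (by omega), zero_mul]
  · rw [Fintype.sum_eq_single ⟨0, by omega⟩ fun k hk => ?_]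
    · rw [if_neg (by simp), if_pos (by simp; omega), mul_assoc, Fin.val_mk, zero_add,
        mul_gphiCoeff hnμ x hj, show (i : ℕ) + j + 1 = j + μ by omega]
    · rw [Ne, Fin.ext_iff] at hk
      rw [if_neg (by omega), if_neg (by simp [hk]), zero_mul]

theorem A0phi_transpose_mul_Gphi (hnμ : n < μ) (x : ℂ) :
    (A0phi μ x)ᵀ * Gphi μ n x = Gphi μ n x * A0phi μ x := by
  ext i j
  rw [← transpose_apply (Gphi μ n x * A0phi μ x), transpose_mul, Gphi_transpose,
    A0phi_transpose_mul_Gphi_apply hnμ, A0phi_transpose_mul_Gphi_apply hnμ, add_comm (j : ℕ)]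

variable {s : ℕ → ℚ}

theorem Ainf_transpose_mul_Gphi_add (hs0 : ∀ k ≤ n, s k = 0)
    (hsym : ∀ i j, i < μ → j < μ → i + j = μ + n → s i + s j = μ) (x : ℂ) :
    (Ainf μ s)ᵀ * Gphi μ n x + Gphi μ n x * Ainf μ s = (n : ℂ) • Gphi μ n x := by
  ext i j
  rw [Ainf, diagonal_transpose_mul_add_mul_diagonal_apply, Matrix.smul_apply, smul_eq_mul]
  simp only [Gphi, of_apply]
  split_ifs with h₁ h₂
  · have hij : ((i : ℕ) : ℂ) + j = n := by exact_mod_cast h₁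
    rw [hs0 i (by omega), hs0 j (by omega), Rat.cast_zero]
    linear_combination hij
  · have hs : ((s i : ℚ) : ℂ) + s j = μ := by exact_mod_cast hsym i j i.isLt j.isLt h₂
    have hij : ((i : ℕ) : ℂ) + j = μ + n := by exact_mod_cast h₂
    linear_combination x * hij - x * hs
  · simp

theorem hasDerivAt_Gphi_apply
    (hsym : ∀ i j, i < μ → j < μ → i + j = μ + n → s i + s j = μ) {x : ℂ} (hx : x ≠ 0)
    (i j : Fin μ) : HasDerivAt (fun y : ℂ => Gphi μ n y i j)
      (x⁻¹ * (((Rphi μ n s)ᵀ * Gphi μ n x + Gphi μ n x * Rphi μ n s) i j)) x := by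
  rw [Rphi, diagonal_transpose_mul_add_mul_diagonal_apply]
  simp only [Gphi, of_apply]
  by_cases h₁ : (i : ℕ) + j = n
  · simp only [h₁, if_true, if_pos (show (i : ℕ) ≤ n by omega), if_pos (show (j : ℕ) ≤ n by omega)]
    simpa using hasDerivAt_const x (1 : ℂ)
  by_cases h₂ : (i : ℕ) + j = μ + n
  · simp only [if_neg h₁, if_pos h₂, if_neg (show ¬(i : ℕ) ≤ n by omega),
      if_neg (show ¬(j : ℕ) ≤ n by omega)]
    have hs : ((s i : ℚ) : ℂ) + s j = μ := by exact_mod_cast hsym i j i.isLt j.isLt h₂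
    have hμ : (μ : ℂ) ≠ 0 := by exact_mod_cast (show μ ≠ 0 by omega)
    refine (hasDerivAt_id' x).congr_deriv ?_
    field_simp
    linear_combination -hs
  · simpa [h₁, h₂] using hasDerivAt_const x (0 : ℂ)

end Gphi

theorem stmt_15_general (n : ℕ) (w : ℕ → ℕ) (hw0 : w 0 = 1)
    (hwpos : ∀ i ∈ Finset.Icc 1 n, 1 ≤ w i)
    (μ : ℕ)
    (s : ℕ → ℚ) (hmono : ∀ k, k + 1 < μ → s k ≤ s (k + 1))
    (hmult : (Multiset.range μ).map s =
      (Finset.range (n + 1)).val.bind fun i =>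
        (Multiset.range (w i)).map fun ℓ => (ℓ : ℚ) * μ / (w i))
    (x : ℂ) (hx : x ≠ 0) :
    (Gphi μ n x)ᵀ = Gphi μ n x ∧
    IsUnit (Gphi μ n x) ∧
    (A0phi μ x)ᵀ * Gphi μ n x = Gphi μ n x * A0phi μ x ∧
    (Ainf μ s)ᵀ * Gphi μ n x + Gphi μ n x * Ainf μ s = (n : ℂ) • Gphi μ n x ∧
    (∀ i j : Fin μ, HasDerivAt (fun y : ℂ => Gphi μ n y i j)
      (x⁻¹ * (((Rphi μ n s)ᵀ * Gphi μ n x + Gphi μ n x * Rphi μ n s) i j)) x) := by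
  have hw : ∀ i ≤ n, w i ≠ 0 := fun i hi => by
    rcases Nat.eq_zero_or_pos i with rfl | hpos
    · simp [hw0]
    · exact Nat.one_le_iff_ne_zero.1 (hwpos i (Finset.mem_Icc.2 ⟨hpos, hi⟩))
  have hs : MonotoneOn s (Set.Iio μ) :=
    monotoneOn_of_le_succ Set.ordConnected_Iio fun k _ _ hk => by
      simpa using hmono k (by simpa using hk)
  rw [← weightSpectrum_eq_bind_map_coe] at hmult
  have hnμ := lt_of_map_range_eq_weightSpectrum hmult hw
  have hs0 := fun k => eq_zero_of_map_range_eq_weightSpectrum hs hmult hw (k := k)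
  have hsym := fun i j => add_eq_of_map_range_eq_weightSpectrum hs hmult hw (i := i) (j := j)
  exact ⟨Gphi_transpose x, isUnit_Gphi hnμ hx, A0phi_transpose_mul_Gphi hnμ x,
    Ainf_transpose_mul_Gphi_add hs0 hsym x, hasDerivAt_Gphi_apply hsym hx⟩

/-- for every `x ≠ 0`, `𝒢^φ(x)` is symmetric and invertible,
`A_0^φ(x)` is `𝒢^φ(x)`-self-adjoint, `A_∞ + A_∞^* = n·Id` with respect to `𝒢^φ(x)`,
and `x·(d/dx)𝒢^φ(x) = (R^φ)ᵀ 𝒢^φ(x) + 𝒢^φ(x) R^φ`. -/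
theorem stmt_15 (n : ℕ) (hn : 1 ≤ n) (w : ℕ → ℕ) (hw0 : w 0 = 1)
    (hwpos : ∀ i ∈ Finset.Icc 1 n, 1 ≤ w i)
    (μ : ℕ) (hμ : μ = 1 + ∑ i ∈ Finset.Icc 1 n, w i)
    (s : ℕ → ℚ) (hmono : ∀ k, k + 1 < μ → s k ≤ s (k + 1))
    (hmult : (Multiset.range μ).map s =
      (Finset.range (n + 1)).val.bind fun i =>
        (Multiset.range (w i)).map fun ℓ => (ℓ : ℚ) * μ / (w i))
    (x : ℂ) (hx : x ≠ 0) :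
    (Gphi μ n x)ᵀ = Gphi μ n x ∧
    IsUnit (Gphi μ n x) ∧
    (A0phi μ x)ᵀ * Gphi μ n x = Gphi μ n x * A0phi μ x ∧
    (Ainf μ s)ᵀ * Gphi μ n x + Gphi μ n x * Ainf μ s = (n : ℂ) • Gphi μ n x ∧
    (∀ i j : Fin μ, HasDerivAt (fun y : ℂ => Gphi μ n y i j)
      (x⁻¹ * (((Rphi μ n s)ᵀ * Gphi μ n x + Gphi μ n x * Rphi μ n s) i j)) x) :=
  stmt_15_general n w hw0 hwpos μ s hmono hmult x hx
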